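/- There exists an absolute constant c > 0 with the following property. Let s[1..n] be any string (n ≥ 1) with previous-occurrence array C and 0th-order empirical entropy H₀(s), and define the string t[1..n] over the nonnegative integers by t[q] = 0 if C[q] = 0 and t[q] = ⌈log₂(2 + log₂(q − C[q]))⌉ + 1 if C[q] ≥ 1. Then H₀(t) ≤ c · log₂(H₀(s) + 2). -/

import Mathlib

/-- `C` is the previous-occurrence array for the string `s[1..n]`:
`C q` is the largest `p < q` (with `p ≥ 1`) such that `s p = s q`, or `0` if none exists. -/
def prevOcc {α : Type*} (n : ℕ) (s : ℕ → α) (C : ℕ → ℕ) : Prop :=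
  ∀ q, 1 ≤ q → q ≤ n →
    (1 ≤ C q ∧ C q < q ∧ s (C q) = s q ∧ ∀ p, C q < p → p < q → s p ≠ s q) ∨
    (C q = 0 ∧ ∀ p, 1 ≤ p → p < q → s p ≠ s q)

/-- The 0th-order empirical entropy `H₀` of the string `w[1..n]`:
`∑_c (n_c/n)·log₂(n/n_c)` over the symbols `c` occurring in `w`,
where `n_c` is the number of occurrences of `c` in `w[1..n]`. -/
noncomputable def H0 {α : Type*} [DecidableEq α] (n : ℕ) (w : ℕ → α) : ℝ :=
  ∑ c ∈ (Finset.Icc 1 n).image w,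
    (((Finset.Icc 1 n).filter (fun q => w q = c)).card : ℝ) / n *
      Real.logb 2 ((n : ℝ) / ((Finset.Icc 1 n).filter (fun q => w q = c)).card)

/-!
For a symbol with `m` occurrences, the intervals `(C q, q]` over its occurrences `q` are disjoint
subintervals of `[1, n]` (the first one starts at `C q = 0`), so by Jensen the `log₂` of its gaps
`q - C q` sum to at most `m log₂ (n / m)`; summed over the symbols this is
`∑ log₂ (q - C q) ≤ n H₀(s)`.
Since `t q ≤ log₂ (2 + log₂ (q - C q)) + 2`, Jensen again bounds the average of `t` by
`log₂ (H₀(s) + 2) + 2`. Finally, Gibbs' inequality against the Kraft weights `2^-(v+1)` shows that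
the entropy of a string of naturals is at most one plus its average, so
`H₀(t) ≤ 3 + log₂ (H₀(s) + 2) ≤ 4 log₂ (H₀(s) + 2)`.
-/

open Finset Real

theorem sum_log_le_card_mul_log_div {ι : Type*} (s : Finset ι) {g : ι → ℝ} {N : ℝ}
    (hg : ∀ i ∈ s, 0 < g i) (hN : ∑ i ∈ s, g i ≤ N) :
    ∑ i ∈ s, log (g i) ≤ #s * log (N / #s) := by
  rcases s.eq_empty_or_nonempty with rfl | hs
  · simp
  have hcard : (0 : ℝ) < #s := by exact_mod_cast hs.card_pos
  have jensen := strictConcaveOn_log_Ioi.concaveOn.le_map_sum (t := s) (w := fun _ ↦ (#s : ℝ)⁻¹)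
    (p := g) (fun _ _ ↦ by positivity) (by simp [hcard.ne']) hg
  simp only [smul_eq_mul, ← mul_sum] at jensen
  have hmono : log ((#s : ℝ)⁻¹ * ∑ i ∈ s, g i) ≤ log (N / #s) := by
    rw [inv_mul_eq_div]
    exact log_le_log (div_pos (sum_pos hg hs) hcard) (by gcongr)
  rw [← inv_mul_le_iff₀ hcard]
  exact jensen.trans hmono

theorem sum_logb_le_card_mul_logb_div {ι : Type*} {b : ℝ} (hb : 1 < b) (s : Finset ι)
    {g : ι → ℝ} {N : ℝ} (hg : ∀ i ∈ s, 0 < g i) (hN : ∑ i ∈ s, g i ≤ N) :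
    ∑ i ∈ s, logb b (g i) ≤ #s * logb b (N / #s) := by
  simp only [logb, ← sum_div, ← mul_div_assoc]
  exact div_le_div_of_nonneg_right (sum_log_le_card_mul_log_div s hg hN) (log_pos hb).le

theorem mul_logb_inv_le_mul_logb_inv_add {b p w : ℝ} (hb : 1 < b) (hp : 0 < p) (hw : 0 < w) :
    p * logb b p⁻¹ ≤ p * logb b w⁻¹ + (w - p) / log b := by
  have hgibbs : p * log (w / p) ≤ w - p := by
    have := mul_le_mul_of_nonneg_left (log_le_sub_one_of_pos (div_pos hw hp)) hp.le
    rwa [mul_sub, mul_div_cancel₀ _ hp.ne', mul_one] at this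
  rw [log_div hw.ne' hp.ne'] at hgibbs
  simp only [logb, log_inv, ← mul_div_assoc, ← add_div]
  rw [div_le_div_iff_of_pos_right (log_pos hb)]
  linarith

section Entropy

variable {α : Type*} [DecidableEq α]

theorem sum_card_filter_image_eq (n : ℕ) (s : ℕ → α) :
    ∑ c ∈ (Icc 1 n).image s, (#{q ∈ Icc 1 n | s q = c} : ℝ) = n := by
  have := card_eq_sum_card_image s (Icc 1 n)
  rw [Nat.card_Icc, add_tsub_cancel_right] at this
  exact_mod_cast this.symm

theorem card_filter_pos_of_mem_image {n : ℕ} {s : ℕ → α} {c : α} (hc : c ∈ (Icc 1 n).image s) :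
    0 < #{q ∈ Icc 1 n | s q = c} := by
  obtain ⟨q, hq, rfl⟩ := mem_image.1 hc
  exact card_pos.2 ⟨q, mem_filter.2 ⟨hq, rfl⟩⟩

theorem card_filter_Icc_le (n : ℕ) (s : ℕ → α) (c : α) : #{q ∈ Icc 1 n | s q = c} ≤ n :=
  (card_filter_le _ _).trans (Nat.card_Icc 1 n).le

theorem H0_nonneg (n : ℕ) (s : ℕ → α) : 0 ≤ H0 n s := by
  refine sum_nonneg fun c hc ↦ mul_nonneg (by positivity) (logb_nonneg one_lt_two ?_)
  rw [one_le_div (by exact_mod_cast card_filter_pos_of_mem_image hc)]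
  exact_mod_cast card_filter_Icc_le n s c

theorem H0_le_sum_logb_inv_div (n : ℕ) (s : ℕ → α) (p : α → ℝ) (hp : ∀ c, 0 < p c)
    (hkraft : ∑ c ∈ (Icc 1 n).image s, p c ≤ 1) :
    H0 n s ≤ (∑ q ∈ Icc 1 n, logb 2 (p (s q))⁻¹) / n := by
  rcases n.eq_zero_or_pos with rfl | hn
  · simp [H0]
  set m : α → ℝ := fun c ↦ #{q ∈ Icc 1 n | s q = c}
  have hfreq : ∑ c ∈ (Icc 1 n).image s, m c / n = 1 := by
    rw [← sum_div, sum_card_filter_image_eq, div_self (by positivity)]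
  have hm : ∀ c ∈ (Icc 1 n).image s, 0 < m c / n := fun c hc ↦ by
    have := card_filter_pos_of_mem_image hc
    positivity
  calc H0 n s = ∑ c ∈ (Icc 1 n).image s, m c / n * logb 2 (m c / n)⁻¹ := by
        simp only [H0, inv_div, m]
    _ ≤ ∑ c ∈ (Icc 1 n).image s, (m c / n * logb 2 (p c)⁻¹ + (p c - m c / n) / log 2) :=
        sum_le_sum fun c hc ↦ mul_logb_inv_le_mul_logb_inv_add one_lt_two (hm c hc) (hp c)
    _ = ∑ c ∈ (Icc 1 n).image s, m c / n * logb 2 (p c)⁻¹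
          + (∑ c ∈ (Icc 1 n).image s, p c - 1) / log 2 := by
        rw [sum_add_distrib, ← sum_div, sum_sub_distrib, hfreq]
    _ ≤ ∑ c ∈ (Icc 1 n).image s, m c / n * logb 2 (p c)⁻¹ :=
        add_le_of_nonpos_right (div_nonpos_of_nonpos_of_nonneg (by linarith)
          (log_pos one_lt_two).le)
    _ = (∑ q ∈ Icc 1 n, logb 2 (p (s q))⁻¹) / n := by
        rw [sum_comp (fun c ↦ logb 2 (p c)⁻¹) s, sum_div]
        exact sum_congr rfl fun c _ ↦ by simp only [m, nsmul_eq_mul]; ring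

end Entropy

theorem H0_le_one_add_sum_div (n : ℕ) (t : ℕ → ℕ) :
    H0 n t ≤ 1 + (∑ q ∈ Icc 1 n, (t q : ℝ)) / n := by
  have hkraft : ∑ v ∈ (Icc 1 n).image t, (1 : ℝ) / 2 / 2 ^ v ≤ 1 :=
    ((summable_geometric_two' 1).sum_le_tsum _ fun _ _ ↦ by positivity).trans_eq
      (tsum_geometric_two' 1)
  have hlength (v : ℕ) : logb 2 (1 / 2 / 2 ^ v : ℝ)⁻¹ = v + 1 := by
    rw [one_div, div_eq_mul_inv, ← mul_inv, ← pow_succ', inv_inv, logb_pow,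
      logb_self_eq_one one_lt_two]
    push_cast
    ring
  calc H0 n t ≤ (∑ q ∈ Icc 1 n, logb 2 (1 / 2 / 2 ^ t q)⁻¹) / n :=
        H0_le_sum_logb_inv_div n t _ (fun _ ↦ by positivity) hkraft
    _ = (∑ q ∈ Icc 1 n, (t q : ℝ)) / n + n / n := by
        rw [sum_congr rfl fun q _ ↦ hlength (t q), sum_add_distrib, sum_const, Nat.card_Icc,
          add_tsub_cancel_right, nsmul_eq_mul, mul_one, add_div]
    _ ≤ 1 + (∑ q ∈ Icc 1 n, (t q : ℝ)) / n := by
        linarith [div_self_le_one (n : ℝ)]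

namespace prevOcc

variable {α : Type*} {n : ℕ} {s : ℕ → α} {C : ℕ → ℕ}

theorem lt (hC : prevOcc n s C) {q : ℕ} (hq : 1 ≤ q) (hqn : q ≤ n) : C q < q := by
  rcases hC q hq hqn with ⟨-, h, -⟩ | ⟨h, -⟩ <;> omega

theorem logb_sub_nonneg (hC : prevOcc n s C) {q : ℕ} (hq : 1 ≤ q) (hqn : q ≤ n) :
    0 ≤ logb 2 ((q : ℝ) - C q) := by
  have : (C q : ℝ) + 1 ≤ q := by exact_mod_cast hC.lt hq hqn
  exact logb_nonneg one_lt_two (by linarith)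

theorem le_of_lt (hC : prevOcc n s C) {p q : ℕ} (hp : 1 ≤ p) (hpq : p < q) (hqn : q ≤ n)
    (hs : s p = s q) : p ≤ C q := by
  rcases hC q (by omega) hqn with ⟨-, -, -, hmax⟩ | ⟨-, hnone⟩
  · by_contra! h
    exact hmax p h hpq hs
  · exact absurd hs (hnone p hp hpq)

variable [DecidableEq α]

theorem sum_sub_le (hC : prevOcc n s C) (a : α) :
    ∑ q ∈ Icc 1 n with s q = a, (q - C q) ≤ n := by
  set O := {q ∈ Icc 1 n | s q = a}
  have hdisj_of_lt : ∀ q ∈ O, ∀ q' ∈ O, q < q' → Disjoint (Ioc (C q) q) (Ioc (C q') q') := by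
    intro q hq q' hq' hlt
    simp only [O, mem_filter, mem_Icc] at hq hq'
    have := hC.le_of_lt hq.1.1 hlt hq'.1.2 (hq.2.trans hq'.2.symm)
    exact disjoint_left.2 fun x hx hx' ↦ by simp only [mem_Ioc] at hx hx'; omega
  have hdisj : (O : Set ℕ).PairwiseDisjoint fun q ↦ Ioc (C q) q := by
    intro q hq q' hq' hne
    rcases hne.lt_or_gt with h | h
    exacts [hdisj_of_lt q hq q' hq' h, (hdisj_of_lt q' hq' q hq h).symm]
  calc ∑ q ∈ O, (q - C q) = #(O.biUnion fun q ↦ Ioc (C q) q) := by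
        simp only [card_biUnion hdisj, Nat.card_Ioc]
    _ ≤ #(Icc 1 n) := card_le_card <| biUnion_subset.2 fun q hq x hx ↦ by
        simp only [O, mem_filter, mem_Icc, mem_Ioc] at hq hx ⊢
        omega
    _ = n := by simp

theorem sum_logb_sub_le (hC : prevOcc n s C) :
    ∑ q ∈ Icc 1 n, logb 2 ((q : ℝ) - C q) ≤ n * H0 n s := by
  rw [← sum_fiberwise_of_maps_to fun q hq ↦ mem_image_of_mem s hq, H0, mul_sum]
  refine sum_le_sum fun a ha ↦ ?_
  set O := {q ∈ Icc 1 n | s q = a}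
  have hlt : ∀ q ∈ O, C q < q := fun q hq ↦ by
    simp only [O, mem_filter, mem_Icc] at hq
    exact hC.lt hq.1.1 hq.1.2
  have hsum : ∑ q ∈ O, ((q : ℝ) - C q) ≤ n := by
    calc ∑ q ∈ O, ((q : ℝ) - C q) = ((∑ q ∈ O, (q - C q) : ℕ) : ℝ) := by
          rw [Nat.cast_sum]
          exact sum_congr rfl fun q hq ↦ (Nat.cast_sub (hlt q hq).le).symm
      _ ≤ n := by exact_mod_cast hC.sum_sub_le a
  have hO : (0 : ℝ) < #O := by exact_mod_cast card_filter_pos_of_mem_image ha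
  have hn : (0 : ℝ) < n := hO.trans_le (by exact_mod_cast card_filter_Icc_le n s a)
  calc ∑ q ∈ O, logb 2 ((q : ℝ) - C q) ≤ #O * logb 2 (n / #O) :=
        sum_logb_le_card_mul_logb_div one_lt_two O
          (fun q hq ↦ sub_pos.2 (by exact_mod_cast hlt q hq)) hsum
    _ = n * (#O / n * logb 2 (n / #O)) := by field_simp

theorem sum_logb_two_add_logb_sub_le (hC : prevOcc n s C) (hn : 1 ≤ n) :
    ∑ q ∈ Icc 1 n, logb 2 (2 + logb 2 ((q : ℝ) - C q)) ≤ n * logb 2 (H0 n s + 2) := by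
  have hpos : ∀ q ∈ Icc 1 n, 0 < 2 + logb 2 ((q : ℝ) - C q) := fun q hq ↦ by
    rw [mem_Icc] at hq
    linarith [hC.logb_sub_nonneg hq.1 hq.2]
  have hsum : ∑ q ∈ Icc 1 n, (2 + logb 2 ((q : ℝ) - C q)) ≤ n * (H0 n s + 2) := by
    rw [sum_add_distrib, sum_const, Nat.card_Icc, add_tsub_cancel_right, nsmul_eq_mul]
    linarith [hC.sum_logb_sub_le]
  have := sum_logb_le_card_mul_logb_div one_lt_two (Icc 1 n) hpos hsum
  rwa [Nat.card_Icc, add_tsub_cancel_right, mul_div_cancel_left₀ _ (by positivity)] at this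

end prevOcc

theorem stmt_14 :
    ∃ c : ℝ, 0 < c ∧
      ∀ (α : Type) (_ : DecidableEq α) (n : ℕ), 1 ≤ n →
        ∀ (s : ℕ → α) (C : ℕ → ℕ), prevOcc n s C →
          ∀ t : ℕ → ℕ,
            (∀ q, 1 ≤ q → q ≤ n →
              (C q = 0 → t q = 0) ∧
              (1 ≤ C q →
                t q = ⌈Real.logb 2 (2 + Real.logb 2 ((q : ℝ) - (C q : ℝ)))⌉₊ + 1)) →
            H0 n t ≤ c * Real.logb 2 (H0 n s + 2) := by
  refine ⟨4, by norm_num, fun α _ n hn s C hC t ht ↦ ?_⟩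
  have ht_le : ∀ q ∈ Icc 1 n, (t q : ℝ) ≤ logb 2 (2 + logb 2 ((q : ℝ) - C q)) + 2 := by
    intro q hq
    rw [mem_Icc] at hq
    have hlog : 0 ≤ logb 2 (2 + logb 2 ((q : ℝ) - C q)) :=
      logb_nonneg one_lt_two (by linarith [hC.logb_sub_nonneg hq.1 hq.2])
    rcases Nat.eq_zero_or_pos (C q) with h | h
    · rw [(ht q hq.1 hq.2).1 h, Nat.cast_zero]
      linarith
    · rw [(ht q hq.1 hq.2).2 h]
      push_cast
      linarith [Nat.ceil_lt_add_one hlog]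
  have hsum : ∑ q ∈ Icc 1 n, (t q : ℝ) ≤ n * logb 2 (H0 n s + 2) + 2 * n := by
    have := (sum_le_sum ht_le).trans_eq sum_add_distrib
    simp only [sum_const, Nat.card_Icc, add_tsub_cancel_right, nsmul_eq_mul] at this
    linarith [hC.sum_logb_two_add_logb_sub_le hn]
  have hone : 1 ≤ logb 2 (H0 n s + 2) := by
    rw [le_logb_iff_rpow_le one_lt_two (by linarith [H0_nonneg n s])]
    linarith [H0_nonneg n s]
  calc H0 n t ≤ 1 + (∑ q ∈ Icc 1 n, (t q : ℝ)) / n := H0_le_one_add_sum_div n t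
    _ ≤ 1 + (n * logb 2 (H0 n s + 2) + 2 * n) / n := by gcongr
    _ = 3 + logb 2 (H0 n s + 2) := by field_simp; ring
    _ ≤ 4 * logb 2 (H0 n s + 2) := by linarith
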